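/- arXiv:2405.03908 — 4 statements merged into one kernel-verified Lean document; each statement's English description precedes it below -/
import Mathlib

section
/- Let R_1, …, R_λ be doubly stochastic t×t matrices and suppose the product R = R_λ···R_1 satisfies ‖R[i] − (1/t)𝟙‖_∞ ≤ 1/n^{1.5} for every row i. Let T⁰ ∈ ℤ^t_{≥0} with Σ_i T⁰_i = N, and define iteratively T^q satisfying componentwise R_{q}·T^{q-1} − t·𝟙 ≤ T^q ≤ R_{q}·T^{q-1} + t·𝟙. Then for each i: R[i]·T⁰ − λt ≤ T^λ_i ≤ R[i]·T⁰ + λt, and hence N/t − N/n^{1.5} − λt ≤ T^λ_i ≤ N/t + N/n^{1.5} + λt. -/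
open Finset Matrix

/-!
Each step is a row-stochastic averaging, which cannot enlarge a sup-norm error, so the `±t`
rounding errors of the `λ` steps simply add up: `T^λ` is within `λt` of `R T⁰`. Since every row
of `R` is entrywise within `n^{-1.5}` of the uniform row `(1/t)𝟙`, the entry `R[i]·T⁰` is within
`N/n^{1.5}` of `N/t`.
-/

section Stochastic

variable {R n : Type*} [Field R] [LinearOrder R] [IsStrictOrderedRing R]
  [Fintype n] [DecidableEq n]

theorem abs_mulVec_le_of_mem_rowStochastic {M : Matrix n n R} (hM : M ∈ rowStochastic R n)
    {x : n → R} {c : R} (hx : ∀ j, |x j| ≤ c) (i : n) : |(M *ᵥ x) i| ≤ c :=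
  calc |(M *ᵥ x) i| ≤ ∑ j, |M i j * x j| := abs_sum_le_sum_abs _ _
    _ = ∑ j, M i j * |x j| := by
        simp only [abs_mul, abs_of_nonneg (nonneg_of_mem_rowStochastic hM)]
    _ ≤ ∑ j, M i j * c :=
        sum_le_sum fun j _ => mul_le_mul_of_nonneg_left (hx j) (nonneg_of_mem_rowStochastic hM)
    _ = c := by rw [← sum_mul, sum_row_of_mem_rowStochastic hM, one_mul]

theorem abs_sub_prod_mulVec_le_of_forall_abs_sub_mulVec_le {m : ℕ} (A : Fin m → Matrix n n R)
    (hA : ∀ q, A q ∈ rowStochastic R n) (x : ℕ → n → R) {c : R}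
    (hx : ∀ q : Fin m, ∀ i, |x (q + 1) i - (A q *ᵥ x q) i| ≤ c) (i : n) :
    |x m i - ((List.ofFn A).reverse.prod *ᵥ x 0) i| ≤ m * c := by
  induction m generalizing i with
  | zero => simp
  | succ m ih =>
    set y := (List.ofFn fun q : Fin m => A q.castSucc).reverse.prod *ᵥ x 0
    have hprod : (List.ofFn A).reverse.prod *ᵥ x 0 = A (Fin.last m) *ᵥ y := by
      rw [List.ofFn_succ', List.concat_eq_append, List.reverse_concat, List.prod_cons,
        ← mulVec_mulVec]
    have hlast : |x (m + 1) i - (A (Fin.last m) *ᵥ x m) i| ≤ c := hx (Fin.last m) i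
    have hprev : |(A (Fin.last m) *ᵥ (x m - y)) i| ≤ m * c :=
      abs_mulVec_le_of_mem_rowStochastic (hA _)
        (ih (fun q => A q.castSucc) (fun q => hA _) fun q => hx q.castSucc) i
    rw [hprod]
    calc |x (m + 1) i - (A (Fin.last m) *ᵥ y) i|
        = |(x (m + 1) i - (A (Fin.last m) *ᵥ x m) i) + (A (Fin.last m) *ᵥ (x m - y)) i| := by
          rw [mulVec_sub, Pi.sub_apply, sub_add_sub_cancel]
      _ ≤ c + m * c := (abs_add_le _ _).trans (add_le_add hlast hprev)
      _ = (m + 1 : ℕ) * c := by push_cast; ring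

end Stochastic

theorem abs_mulVec_sub_mul_sum_le {R m n : Type*} [Field R] [LinearOrder R]
    [IsStrictOrderedRing R] [Fintype n] {P : Matrix m n R} {a ε : R} (i : m)
    (hP : ∀ j, |P i j - a| ≤ ε) {v : n → R} (hv : ∀ j, 0 ≤ v j) :
    |(P *ᵥ v) i - a * ∑ j, v j| ≤ ε * ∑ j, v j := by
  have hdiff : (P *ᵥ v) i - a * ∑ j, v j = ∑ j, (P i j - a) * v j := by
    simp only [mulVec, dotProduct, sub_mul, sum_sub_distrib, mul_sum]
  calc |(P *ᵥ v) i - a * ∑ j, v j| ≤ ∑ j, |(P i j - a) * v j| := hdiff ▸ abs_sum_le_sum_abs _ _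
    _ = ∑ j, |P i j - a| * v j := by simp only [abs_mul, abs_of_nonneg (hv _)]
    _ ≤ ∑ j, ε * v j := sum_le_sum fun j _ => mul_le_mul_of_nonneg_right (hP j) (hv j)
    _ = ε * ∑ j, v j := (mul_sum _ _ _).symm

/-- Let `R_1, …, R_λ` be doubly stochastic `t×t` matrices whose product
`R = R_λ⋯R_1` has all entries within `1/n^{1.5}` of `1/t`. If token counts `T^q` follow the
walks up to additive error `±t` per step, starting from an integral vector `T⁰` of total mass
`N`, then `R[i]·T⁰ − λt ≤ T^λ_i ≤ R[i]·T⁰ + λt`, and hence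
`N/t − N/n^{1.5} − λt ≤ T^λ_i ≤ N/t + N/n^{1.5} + λt`. -/
theorem dispersion_after_mixing (t n lam N : ℕ)
    (Rm : Fin lam → Matrix (Fin t) (Fin t) ℝ)
    (hstoch : ∀ q : Fin lam, (∀ i j, 0 ≤ Rm q i j) ∧ (∀ i, ∑ j, Rm q i j = 1) ∧
      (∀ j, ∑ i, Rm q i j = 1))
    (P : Matrix (Fin t) (Fin t) ℝ)
    (hP : P = ((List.ofFn fun q : Fin lam => Rm q).reverse).prod)
    (hmix : ∀ i j, |P i j - 1 / t| ≤ 1 / (n : ℝ) ^ (1.5 : ℝ))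
    (T0 : Fin t → ℕ) (hN : ∑ i, T0 i = N)
    (T : ℕ → Fin t → ℝ) (hT0 : ∀ i, T 0 i = (T0 i : ℝ))
    (hstep : ∀ q : Fin lam, ∀ i,
      (Rm q).mulVec (T q) i - t ≤ T (q + 1) i ∧ T (q + 1) i ≤ (Rm q).mulVec (T q) i + t) :
    ∀ i : Fin t,
      (P.mulVec (fun j => (T0 j : ℝ)) i - lam * t ≤ T lam i ∧
        T lam i ≤ P.mulVec (fun j => (T0 j : ℝ)) i + lam * t) ∧
      ((N : ℝ) / t - (N : ℝ) / (n : ℝ) ^ (1.5 : ℝ) - lam * t ≤ T lam i ∧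
        T lam i ≤ (N : ℝ) / t + (N : ℝ) / (n : ℝ) ^ (1.5 : ℝ) + lam * t) := by
  intro i
  have hstart : T 0 = fun j => (T0 j : ℝ) := funext hT0
  have hwalk : |T lam i - (P *ᵥ fun j => (T0 j : ℝ)) i| ≤ lam * t := by
    rw [hP, ← hstart]
    refine abs_sub_prod_mulVec_le_of_forall_abs_sub_mulVec_le Rm
      (fun q => mem_rowStochastic_iff_sum.2 ⟨(hstoch q).1, (hstoch q).2.1⟩) T
      (fun q j => abs_sub_le_iff.2 ⟨?_, ?_⟩) i <;> linarith [hstep q j]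
  have hmass : ∑ j, (T0 j : ℝ) = N := by exact_mod_cast hN
  have hmixed := abs_mulVec_sub_mul_sum_le i (hmix i) (v := fun j => (T0 j : ℝ))
    fun j => Nat.cast_nonneg _
  rw [hmass, one_div_mul_eq_div, one_div_mul_eq_div] at hmixed
  obtain ⟨hwalk_lo, hwalk_hi⟩ := abs_le.1 hwalk
  obtain ⟨hmixed_lo, hmixed_hi⟩ := abs_le.1 hmixed
  exact ⟨⟨by linarith, by linarith⟩, ⟨by linarith, by linarith⟩⟩
end

section
/- Let N_i^q denote the number of tokens at part i after q iterations of integral matching-based token redistribution on t parts, where in each iteration q, for each pair (i,j) and each label l, part i sends ⌊(1/2)m_{ij}|T^{q−1}_{i,l}|⌋ tokens of label l to part j, with M^q = {m_{ij}} a fractional matching and at most t labels. If N_i^0 ≤ N_max for all i, then N_i^q ≤ N_max + t²q for all i and q. -/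
open Finset

/-- A fractional matching on `t` vertices. -/
def IsFractionalMatching (t : ℕ) (x : Fin t → Fin t → ℝ) : Prop :=
  (∀ u v, 0 ≤ x u v ∧ x u v ≤ 1) ∧ (∀ u v, x u v = x v u) ∧
    (∀ u, ∑ v ∈ Finset.univ.erase u, x u v ≤ 1)

/-- In integral matching-based token redistribution on `t` parts with at
most `t` labels (in each iteration `q`, part `i` sends `⌊(1/2)m_{ij}|T^{q−1}_{i,l}|⌋` tokens
of label `l` to part `j`, where `M^q` is a fractional matching), if each part initially holds
at most `N_max` tokens, then after `q` iterations each part holds at most `N_max + t²q`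
tokens. -/
theorem token_count_bound (t : ℕ) (m : ℕ → Fin t → Fin t → ℝ)
    (hm : ∀ q, IsFractionalMatching t (m q))
    (T : ℕ → Fin t → Fin t → ℕ) (Nmax : ℕ)
    (h0 : ∀ i, ∑ l, T 0 i l ≤ Nmax)
    (hstep : ∀ q (i l : Fin t),
      (T (q + 1) i l : ℝ) =
        (T q i l : ℝ)
          - ∑ j ∈ Finset.univ.erase i, (⌊(m (q + 1) i j / 2) * (T q i l : ℝ)⌋₊ : ℝ)
          + ∑ j ∈ Finset.univ.erase i, (⌊(m (q + 1) j i / 2) * (T q j l : ℝ)⌋₊ : ℝ)) :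
    ∀ q (i : Fin t), ((∑ l, T q i l : ℕ) : ℝ) ≤ (Nmax : ℝ) + t ^ 2 * q := by
  intro q
  induction q with
  | zero =>
    intro i
    simp only [Nat.cast_zero, mul_zero, add_zero]
    exact_mod_cast h0 i
  | succ q ih =>
    intro i
    obtain ⟨hb, hsymm, hsum⟩ := hm (q + 1)
    set B : ℝ := (Nmax : ℝ) + t ^ 2 * q with hBdef
    have hN : ∀ j, (∑ l, (T q j l : ℝ)) ≤ B := by
      intro j
      have := ih j
      rwa [Nat.cast_sum] at this
    have hNnn : ∀ j, 0 ≤ ∑ l, (T q j l : ℝ) :=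
      fun j => Finset.sum_nonneg fun l _ => Nat.cast_nonneg _
    have hBnn : 0 ≤ B := le_trans (hNnn i) (hN i)
    set s : ℝ := ∑ j ∈ Finset.univ.erase i, m (q + 1) i j / 2 with hsdef
    have hs0 : 0 ≤ s :=
      Finset.sum_nonneg fun j _ => by have := (hb i j).1; linarith
    have hs1 : s ≤ 1 := by
      have h2 : s = (∑ j ∈ Finset.univ.erase i, m (q + 1) i j) / 2 := by
        rw [hsdef, Finset.sum_div]
      rw [h2]
      linarith [hsum i]
    -- the summed evolution equation
    have heq : (∑ l, (T (q + 1) i l : ℝ))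
        = (∑ l, (T q i l : ℝ))
          - ∑ l, ∑ j ∈ Finset.univ.erase i,
              (⌊(m (q + 1) i j / 2) * (T q i l : ℝ)⌋₊ : ℝ)
          + ∑ l, ∑ j ∈ Finset.univ.erase i,
              (⌊(m (q + 1) j i / 2) * (T q j l : ℝ)⌋₊ : ℝ) := by
      rw [← Finset.sum_sub_distrib, ← Finset.sum_add_distrib]
      exact Finset.sum_congr rfl fun l _ => hstep q i l
    -- incoming bound
    have hin : ∑ l, ∑ j ∈ Finset.univ.erase i,
        (⌊(m (q + 1) j i / 2) * (T q j l : ℝ)⌋₊ : ℝ) ≤ s * B := by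
      rw [Finset.sum_comm]
      have h1 : ∀ j ∈ Finset.univ.erase i,
          ∑ l, (⌊(m (q + 1) j i / 2) * (T q j l : ℝ)⌋₊ : ℝ)
            ≤ (m (q + 1) i j / 2) * B := by
        intro j _
        have hc : 0 ≤ m (q + 1) j i / 2 := by have := (hb j i).1; linarith
        calc ∑ l, (⌊(m (q + 1) j i / 2) * (T q j l : ℝ)⌋₊ : ℝ)
            ≤ ∑ l, (m (q + 1) j i / 2) * (T q j l : ℝ) :=
              Finset.sum_le_sum fun l _ =>
                Nat.floor_le (mul_nonneg hc (Nat.cast_nonneg _))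
          _ = (m (q + 1) j i / 2) * ∑ l, (T q j l : ℝ) := by
              rw [Finset.mul_sum]
          _ ≤ (m (q + 1) j i / 2) * B := by
              exact mul_le_mul_of_nonneg_left (hN j) hc
          _ = (m (q + 1) i j / 2) * B := by rw [hsymm j i]
      calc ∑ j ∈ Finset.univ.erase i, ∑ l,
            (⌊(m (q + 1) j i / 2) * (T q j l : ℝ)⌋₊ : ℝ)
          ≤ ∑ j ∈ Finset.univ.erase i, (m (q + 1) i j / 2) * B :=
            Finset.sum_le_sum h1
        _ = s * B := by rw [hsdef, Finset.sum_mul]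
    -- outgoing bound
    have hout : s * (∑ l, (T q i l : ℝ)) - (t : ℝ) * t
        ≤ ∑ l, ∑ j ∈ Finset.univ.erase i,
            (⌊(m (q + 1) i j / 2) * (T q i l : ℝ)⌋₊ : ℝ) := by
      have h1 : ∑ l, ∑ j ∈ Finset.univ.erase i,
          ((m (q + 1) i j / 2) * (T q i l : ℝ) - 1)
            ≤ ∑ l, ∑ j ∈ Finset.univ.erase i,
              (⌊(m (q + 1) i j / 2) * (T q i l : ℝ)⌋₊ : ℝ) :=
        Finset.sum_le_sum fun l _ => Finset.sum_le_sum fun j _ =>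
          le_of_lt (Nat.sub_one_lt_floor _)
      have h2 : ∑ l, ∑ j ∈ Finset.univ.erase i,
          ((m (q + 1) i j / 2) * (T q i l : ℝ) - 1)
            = s * (∑ l, (T q i l : ℝ))
              - (t : ℝ) * ((Finset.univ.erase i).card : ℝ) := by
        simp only [Finset.sum_sub_distrib, Finset.sum_const, nsmul_eq_mul]
        rw [Finset.mul_sum]
        congr 1
        · refine Finset.sum_congr rfl fun l _ => ?_
          rw [hsdef, Finset.sum_mul]
        · simp [Finset.card_univ, mul_comm]
      have h3 : ((Finset.univ.erase i).card : ℝ) ≤ (t : ℝ) := by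
        have : (Finset.univ.erase i).card ≤ t := by
          calc (Finset.univ.erase i).card ≤ (Finset.univ : Finset (Fin t)).card :=
                Finset.card_le_card (Finset.erase_subset _ _)
            _ = t := by simp
        exact_mod_cast this
      have htnn : (0 : ℝ) ≤ t := Nat.cast_nonneg _
      nlinarith [h1, h2, h3]
    -- combine
    have hgoal : (Nmax : ℝ) + (t : ℝ) ^ 2 * ((q + 1 : ℕ) : ℝ) = B + (t : ℝ) ^ 2 := by
      rw [hBdef]; push_cast; ring
    rw [Nat.cast_sum, hgoal]
    have hprod : 0 ≤ (1 - s) * (B - ∑ l, (T q i l : ℝ)) :=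
      mul_nonneg (by linarith) (by linarith [hN i])
    nlinarith [heq, hin, hout, hprod]
end

section
/- In the cut-matching potential decrease argument: if n' ≥ 18 vertex-disjoint mappings σ_1, …, σ_{n'/18} from S to S' are extracted from a matching saturating S_X (each part containing at least n'/18 matched vertices), and each σ_j satisfies Σ_{a∈S} ‖R_{i−1}[a] − R_{i−1}[σ_j(a)]‖² ≥ (1/720)·Π(i−1), then Σ_{a∈S}Σ_{b∈S'} (m_{ab}/2)‖R_{i−1}[a] − R_{i−1}[b]‖² ≥ (1/(2n')) · (n'/18) · (1/720) · Π(i−1) = Π(i−1)/(2·18·720). -/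
open Finset

/-! Each mapping `σ_j` sends `S` into `S'`, so counting, for every pair `(a, b)`, the mappings
with `σ_j(a) = b` turns the sum over the `J ≥ n'/18` mappings of their costs
`Σ_a ‖R[a] − R[σ_j(a)]‖²` into a sum over pairs weighted by these counts. Since the fractional
matching dominates the counts divided by `n'`, its weighted cost is at least `1/n'` times the total
cost of the mappings, which is at least `(n'/18) · Π/720`. -/

theorem Finset.sum_card_fiber_nsmul {ι κ M : Type*} [AddCommMonoid M] [DecidableEq κ]
    {s : Finset ι} {t : Finset κ} {g : ι → κ} (h : ∀ i ∈ s, g i ∈ t) (f : κ → M) :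
    ∑ k ∈ t, #{i ∈ s | g i = k} • f k = ∑ i ∈ s, f (g i) := by
  simp_rw [← sum_const]
  exact sum_fiberwise_of_maps_to' h f

theorem Finset.sum_sum_card_fiber_nsmul {ι α β M : Type*} [Fintype ι] [AddCommMonoid M]
    [DecidableEq β] {S : Finset α} {S' : Finset β} {σ : ι → α → β}
    (hσ : ∀ j, ∀ a ∈ S, σ j a ∈ S') (f : α → β → M) :
    ∑ a ∈ S, ∑ b ∈ S', #{j | σ j a = b} • f a b = ∑ j, ∑ a ∈ S, f a (σ j a) := by
  rw [sum_comm (s := univ)]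
  exact sum_congr rfl fun a ha => sum_card_fiber_nsmul (fun j _ => hσ j a ha) (f a)

theorem mul_le_sum_of_forall_le {ι R : Type*} [Fintype ι] [Semiring R] [LinearOrder R]
    [IsOrderedRing R] {f : ι → R} {r c : R} (hr₀ : 0 ≤ r) (hr : r ≤ Fintype.card ι)
    (hf : ∀ i, 0 ≤ f i) (hc : ∀ i, c ≤ f i) : r * c ≤ ∑ i, f i := by
  rcases le_total c 0 with hc₀ | hc₀
  · exact (mul_nonpos_of_nonneg_of_nonpos hr₀ hc₀).trans (sum_nonneg fun i _ => hf i)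
  · calc r * c ≤ Fintype.card ι * c := mul_le_mul_of_nonneg_right hr hc₀
      _ = ∑ _i, c := by simp
      _ ≤ ∑ i, f i := sum_le_sum fun i _ => hc i

theorem inv_mul_sum_sum_comp_le_sum_sum_mul {ι α β K : Type*} [Fintype ι] [DecidableEq β]
    [Field K] [LinearOrder K] [IsStrictOrderedRing K] {S : Finset α} {S' : Finset β}
    {σ : ι → α → β} (hσ : ∀ j, ∀ a ∈ S, σ j a ∈ S') {d m : α → β → K} {n : K}
    (hd : ∀ a b, 0 ≤ d a b) (hm : ∀ a ∈ S, ∀ b ∈ S', (#{j | σ j a = b} : K) / n ≤ m a b) :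
    n⁻¹ * ∑ j, ∑ a ∈ S, d a (σ j a) ≤ ∑ a ∈ S, ∑ b ∈ S', m a b * d a b := by
  rw [← sum_sum_card_fiber_nsmul hσ, mul_sum]
  refine sum_le_sum fun a ha => ?_
  rw [mul_sum]
  refine sum_le_sum fun b hb => ?_
  rw [nsmul_eq_mul, ← mul_assoc, inv_mul_eq_div]
  exact mul_le_mul_of_nonneg_right (hm a ha b hb) (hd a b)

/-- Suppose `J ≥ n'/18` mappings `σ_1, …, σ_J` from `S` to `S'` are
extracted from a matching saturating `S_X`, so that the natural fractional matching values
satisfy `m_{ab} ≥ |{j : σ_j(a) = b}|/n'`, and each mapping satisfies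
`Σ_{a∈S} ‖R[a] − R[σ_j(a)]‖² ≥ (1/720)·Π`. Then
`Σ_{a∈S} Σ_{b∈S'} (m_{ab}/2)·‖R[a] − R[b]‖² ≥ Π/(2·18·720)`. -/
theorem fractional_matching_potential_bound
    (t n' J : ℕ) (hn' : 0 < n') (hJ : (n' : ℝ) / 18 ≤ (J : ℝ))
    (R : Fin t → Fin t → ℝ) (S S' : Finset (Fin t))
    (m : Fin t → Fin t → ℝ)
    (σ : Fin J → Fin t → Fin t)
    (hσ : ∀ (j : Fin J), ∀ a ∈ S, σ j a ∈ S')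
    (Pot : ℝ)
    (hpot : ∀ j : Fin J, Pot / 720 ≤ ∑ a ∈ S, ∑ x, (R a x - R (σ j a) x) ^ 2)
    (hm : ∀ a ∈ S, ∀ b ∈ S',
      ((Finset.univ.filter fun j : Fin J => σ j a = b).card : ℝ) / n' ≤ m a b) :
    Pot / (2 * 18 * 720) ≤
      ∑ a ∈ S, ∑ b ∈ S', (m a b / 2) * ∑ x, (R a x - R b x) ^ 2 := by
  set d : Fin t → Fin t → ℝ := fun a b => ∑ x, (R a x - R b x) ^ 2
  have hd : ∀ a b, 0 ≤ d a b := fun a b => by positivity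
  have hcost : (n' : ℝ) / 18 * (Pot / 720) ≤ ∑ j, ∑ a ∈ S, d a (σ j a) :=
    mul_le_sum_of_forall_le (by positivity) (by simpa using hJ)
      (fun j => sum_nonneg fun a _ => hd a _) hpot
  calc Pot / (2 * 18 * 720) = 2⁻¹ * ((n' : ℝ)⁻¹ * ((n' : ℝ) / 18 * (Pot / 720))) := by
        field_simp
    _ ≤ 2⁻¹ * ((n' : ℝ)⁻¹ * ∑ j, ∑ a ∈ S, d a (σ j a)) := by gcongr
    _ ≤ 2⁻¹ * ∑ a ∈ S, ∑ b ∈ S', m a b * d a b := by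
        gcongr
        exact inv_mul_sum_sum_comp_le_sum_sum_mul hσ hd hm
    _ = ∑ a ∈ S, ∑ b ∈ S', (m a b / 2) * d a b := by
        simp only [mul_sum, div_eq_inv_mul, mul_assoc]
end

section
/- Let the token counts after λ iterations satisfy T^λ ≤ R·T⁰ + λt·𝟙 componentwise (and symmetrically T^λ ≥ R·T⁰ − λt·𝟙), where R is a doubly stochastic matrix with all entries in [1/t − 1/n^{1.5}, 1/t + 1/n^{1.5}], Σ_i T⁰_i = N_l, 0.1·|X|/t² ≥ λt (which holds when |X| ≥ n^{4ε}, t ≤ n^ε, λ = O(log n)), and N_l/n^{1.5} ≤ 0.1·N_l/t. Then each part holds at most 1.1·N_l/t + 0.1·|X|/t² and at least 0.9·N_l/t − 0.1·|X|/t² tokens of label l, i.e., a dispersed configuration is achieved. -/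
open Finset

/-- **dispersed configuration.** Suppose the token counts after `λ`
iterations satisfy `R·T⁰ − λt ≤ T^λ ≤ R·T⁰ + λt` componentwise, where `R` is a doubly
stochastic matrix with all entries in `[1/t − 1/n^{1.5}, 1/t + 1/n^{1.5}]` and `Σ_i T⁰_i = N_l`.
If moreover `0.1·|X|/t² ≥ λt` and `N_l/n^{1.5} ≤ 0.1·N_l/t`, then each part holds at most
`1.1·N_l/t + 0.1·|X|/t²` and at least `0.9·N_l/t − 0.1·|X|/t²` tokens of label `l`, i.e. a
dispersed configuration is achieved. -/
theorem dispersed_configuration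
    (t n lam Nl : ℕ) (X : ℝ)
    (R : Matrix (Fin t) (Fin t) ℝ)
    (hnonneg : ∀ i j, 0 ≤ R i j)
    (hrow : ∀ i, ∑ j, R i j = 1) (hcol : ∀ j, ∑ i, R i j = 1)
    (hentries : ∀ i j, 1 / (t : ℝ) - 1 / (n : ℝ) ^ (1.5 : ℝ) ≤ R i j ∧
      R i j ≤ 1 / (t : ℝ) + 1 / (n : ℝ) ^ (1.5 : ℝ))
    (T0 : Fin t → ℕ) (hN : ∑ i, T0 i = Nl)
    (Tlam : Fin t → ℝ)
    (hTlam : ∀ i, R.mulVec (fun j => (T0 j : ℝ)) i - lam * t ≤ Tlam i ∧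
      Tlam i ≤ R.mulVec (fun j => (T0 j : ℝ)) i + lam * t)
    (hX : (lam : ℝ) * t ≤ 0.1 * X / (t : ℝ) ^ 2)
    (hNl : (Nl : ℝ) / (n : ℝ) ^ (1.5 : ℝ) ≤ 0.1 * Nl / t) :
    ∀ i : Fin t,
      Tlam i ≤ 1.1 * Nl / t + 0.1 * X / (t : ℝ) ^ 2 ∧
        0.9 * Nl / t - 0.1 * X / (t : ℝ) ^ 2 ≤ Tlam i := by
  intro i
  have ht : (0:ℝ) < t := by exact_mod_cast i.pos
  have hsum : ∑ j, (T0 j : ℝ) = Nl := by exact_mod_cast hN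
  have hmul : R.mulVec (fun j => (T0 j : ℝ)) i = ∑ j, R i j * T0 j := rfl
  have hub : ∑ j, R i j * (T0 j : ℝ) ≤ (1 / t + 1 / (n:ℝ)^(1.5:ℝ)) * Nl := by
    rw [← hsum, Finset.mul_sum]
    exact Finset.sum_le_sum fun j _ =>
      mul_le_mul_of_nonneg_right (hentries i j).2 (Nat.cast_nonneg _)
  have hlb : (1 / t - 1 / (n:ℝ)^(1.5:ℝ)) * Nl ≤ ∑ j, R i j * (T0 j : ℝ) := by
    rw [← hsum, Finset.mul_sum]
    exact Finset.sum_le_sum fun j _ =>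
      mul_le_mul_of_nonneg_right (hentries i j).1 (Nat.cast_nonneg _)
  have hNl' : (1/(n:ℝ)^(1.5:ℝ)) * Nl ≤ 0.1 * Nl / t := by
    rw [one_div, mul_comm, ← div_eq_mul_inv]; exact hNl
  obtain ⟨h1, h2⟩ := hTlam i
  rw [hmul] at h1 h2
  have e1 : (1 / (t:ℝ) + 1/(n:ℝ)^(1.5:ℝ)) * Nl = Nl/t + 1/(n:ℝ)^(1.5:ℝ) * Nl := by ring
  have e2 : 1.1 * (Nl:ℝ)/t = Nl/t + 0.1 * Nl/t := by ring
  have e3 : (1 / (t:ℝ) - 1/(n:ℝ)^(1.5:ℝ)) * Nl = Nl/t - 1/(n:ℝ)^(1.5:ℝ) * Nl := by ring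
  have e4 : 0.9 * (Nl:ℝ)/t = Nl/t - 0.1 * Nl/t := by ring
  constructor
  · linarith
  · linarith
end
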